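/- Let X and Y be real normed spaces, let ν > 0, C > 0, C_Ω > 0 be real numbers, and let A : (X × Y) → (X × Y) → ℝ be a bilinear form. Fix (u,p) ∈ X × Y and assume: (i) A((u,p),(u,−p)) ≥ ‖u‖_X²; (ii) w ∈ X satisfies ‖w‖_X ≤ ν^{−1/2}‖p‖_Y and A((u,p),(w,0)) ≥ C_Ω ν^{−1}‖p‖_Y² − C‖u‖_X‖w‖_X. Then, with δ = C_Ω/(4C²), the coercivity bound A((u,p),(u + δw, −p)) ≥ min{1/2, C_Ω²/(8C²)} · (‖u‖_X² + ν^{−1}‖p‖_Y²) holds. -/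

import Mathlib

/-!
Testing against `u + δ w` instead of `u` adds `δ` times the inf-sup lower bound
`C_Ω β² - C ‖u‖ ‖w‖`, where `β = ν^{-1/2} ‖p‖ ≥ ‖w‖`. With `k = C_Ω / (4C)` the cross term
`δ C ‖u‖ ‖w‖ = k ‖u‖ ‖w‖` is absorbed by Young's inequality `k a β ≤ a²/8 + 2k² β²`, leaving
`(7/8) ‖u‖² + 2k² β²`, and `2k² = C_Ω² / (8C²)`.
-/

theorem LinearMap.map_add_smul_fst {R M N P : Type*} [Semiring R] [AddCommMonoid M]
    [AddCommMonoid N] [AddCommMonoid P] [Module R M] [Module R N] [Module R P]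
    (f : M × N →ₗ[R] P) (x w : M) (y : N) (c : R) :
    f (x + c • w, y) = f (x, y) + c • f (w, 0) := by
  rw [← map_smul, ← map_add, Prod.smul_mk, smul_zero, Prod.mk_add_mk, add_zero]

theorem min_half_two_mul_sq_mul_le {a β t k : ℝ} (ha : 0 ≤ a) (hk : 0 ≤ k) (ht : t ≤ β) :
    min (1 / 2) (2 * k ^ 2) * (a ^ 2 + β ^ 2) ≤ a ^ 2 + 4 * k ^ 2 * β ^ 2 - k * a * t := by
  have hcross : k * a * t ≤ k * a * β := by gcongr
  have hyoung : k * a * β ≤ a ^ 2 / 8 + 2 * k ^ 2 * β ^ 2 := by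
    nlinarith [sq_nonneg (a - 4 * k * β)]
  have ha2 := mul_le_mul_of_nonneg_right (min_le_left (1 / 2) (2 * k ^ 2)) (sq_nonneg a)
  have hβ2 := mul_le_mul_of_nonneg_right (min_le_right (1 / 2) (2 * k ^ 2)) (sq_nonneg β)
  linarith [sq_nonneg a]

theorem min_half_mul_le_add_inf_sup {C C_Ω a β t : ℝ} (hC : 0 < C) (hCΩ : 0 < C_Ω)
    (ha : 0 ≤ a) (ht : t ≤ β) :
    min (1 / 2) (C_Ω ^ 2 / (8 * C ^ 2)) * (a ^ 2 + β ^ 2) ≤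
      a ^ 2 + C_Ω / (4 * C ^ 2) * (C_Ω * β ^ 2 - C * a * t) := by
  have h := min_half_two_mul_sq_mul_le ha (k := C_Ω / (4 * C)) (by positivity) ht
  have h2k : 2 * (C_Ω / (4 * C)) ^ 2 = C_Ω ^ 2 / (8 * C ^ 2) := by field_simp; norm_num
  have hrhs : 4 * (C_Ω / (4 * C)) ^ 2 * β ^ 2 - C_Ω / (4 * C) * a * t =
      C_Ω / (4 * C ^ 2) * (C_Ω * β ^ 2 - C * a * t) := by field_simp
  rwa [h2k, add_sub_assoc, hrhs] at h

/-- Coercivity estimate (infsup11) in the proof of Lemma 4.1. -/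
theorem dg_stability_coercivity
    {X : Type*} [NormedAddCommGroup X] [NormedSpace ℝ X]
    {Y : Type*} [NormedAddCommGroup Y] [NormedSpace ℝ Y]
    (ν C C_Ω : ℝ) (hν : 0 < ν) (hC : 0 < C) (hCΩ : 0 < C_Ω)
    (A : (X × Y) →ₗ[ℝ] (X × Y) →ₗ[ℝ] ℝ)
    (u : X) (p : Y) (w : X)
    (hcoer : A (u, p) (u, -p) ≥ ‖u‖ ^ 2)
    (hwnorm : ‖w‖ ≤ (Real.sqrt ν)⁻¹ * ‖p‖)
    (hwinfsup : A (u, p) (w, 0) ≥ C_Ω * ν⁻¹ * ‖p‖ ^ 2 - C * ‖u‖ * ‖w‖) :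
    A (u, p) (u + (C_Ω / (4 * C ^ 2)) • w, -p) ≥
      min (1 / 2) (C_Ω ^ 2 / (8 * C ^ 2)) * (‖u‖ ^ 2 + ν⁻¹ * ‖p‖ ^ 2) := by
  set δ := C_Ω / (4 * C ^ 2)
  set β := (Real.sqrt ν)⁻¹ * ‖p‖
  have hβ : ν⁻¹ * ‖p‖ ^ 2 = β ^ 2 := by rw [mul_pow, inv_pow, Real.sq_sqrt hν.le]
  rw [hβ]
  calc min (1 / 2) (C_Ω ^ 2 / (8 * C ^ 2)) * (‖u‖ ^ 2 + β ^ 2)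
      ≤ ‖u‖ ^ 2 + δ * (C_Ω * β ^ 2 - C * ‖u‖ * ‖w‖) :=
        min_half_mul_le_add_inf_sup hC hCΩ (norm_nonneg u) hwnorm
    _ ≤ A (u, p) (u, -p) + δ * A (u, p) (w, 0) := by
        rw [← hβ, ← mul_assoc]
        gcongr
    _ = A (u, p) (u + δ • w, -p) := ((A (u, p)).map_add_smul_fst u w (-p) δ).symm
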